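/- Let f : Λ₊ → Matrix(m, k, ℂ) be discrete analytic on Λ₊, let p be the standard basis of discrete analytic polynomials on Λ₊, and let Z be a primitive operator on matrix-valued discrete analytic functions on Λ₊. Then f is a rational discrete analytic function if and only if there exist N ∈ ℕ and complex scalars a₀, …, a_N, not all zero, such that the function z ↦ Σ_{j=0}^{N} a_j · (Zʲ f)(z) is a discrete analytic polynomial, i.e. equals Σ_{l=0}^{M} p l (z) · B_l for some M ∈ ℕ and matrices B₀, …, B_M ∈ Matrix(m, k, ℂ). -/

import Mathlib

open Complex

noncomputable section

/-- The Gaussian integer lattice Λ = ℤ + iℤ. -/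
abbrev GI := GaussianInt

/-- The lattice element i. -/
def Ii : GI := ⟨0, 1⟩

/-- The right half-lattice Λ₊ = {z ∈ Λ : Re z ≥ 0}. -/
def Lp := {z : GI // 0 ≤ z.re}

/-- The point 0 of Λ₊. -/
def pt0 : Lp := ⟨0, le_refl 0⟩

/-- The shift z ↦ z + 1 on Λ₊. -/
def shx (z : Lp) : Lp := ⟨z.1 + 1, by have := z.2; simp [Zsqrtd.re_add]; omega⟩

/-- The shift z ↦ z + i on Λ₊. -/
def shy (z : Lp) : Lp := ⟨z.1 + Ii, by have := z.2; simp [Zsqrtd.re_add, Ii]; omega⟩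

/-- α₊ = (1+i)/2. -/
def ap : ℂ := (1 + I) / 2

/-- α₋ = (1−i)/2. -/
def am : ℂ := (1 - I) / 2

/-- The difference operator δ_x on functions on Λ₊. -/
def dxp (f : Lp → ℂ) : Lp → ℂ := fun z => f (shx z) - f z

/-- The difference operator δ_y on functions on Λ₊. -/
def dyp (f : Lp → ℂ) : Lp → ℂ := fun z => f (shy z) - f z

/-- Discrete analyticity on the right half-lattice Λ₊. -/
def DAp (f : Lp → ℂ) : Prop :=
  ∀ z : Lp, (f (shx (shy z)) - f z) / (1 + I) = (f (shx z) - f (shy z)) / (1 - I)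

/-- The defining property of the standard basis of discrete analytic polynomials
on Λ₊. -/
def IsStdBasisP (p : ℕ → Lp → ℂ) : Prop :=
  (∀ n, DAp (p n)) ∧ (∀ z : Lp, p 0 z = 1) ∧ (∀ n, p (n + 1) pt0 = 0) ∧
    (∀ n, dxp (p (n + 1)) = p n)

/-- e_A(z) = (1+A)^{Re z} (1+α₊A)^{Im z} (1+α₋A)^{−Im z}, where negative integer
powers are powers of the inverse matrix. -/
def eMat {N : ℕ} (A : Matrix (Fin N) (Fin N) ℂ) (z : Lp) : Matrix (Fin N) (Fin N) ℂ :=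
  (1 + A) ^ z.1.re.toNat * (1 + ap • A) ^ (z.1.im : ℤ) * (1 + am • A) ^ (-(z.1.im : ℤ))

/-- The difference operator δ_x on V-valued functions on Λ₊. -/
def dxV {V : Type*} [AddCommGroup V] (f : Lp → V) : Lp → V := fun z => f (shx z) - f z

/-- Discrete analyticity on Λ₊ for functions with values in a complex vector
space. -/
def DApV {V : Type*} [AddCommGroup V] [Module ℂ V] (f : Lp → V) : Prop :=
  ∀ z : Lp, ((1 + I)⁻¹ : ℂ) • (f (shx (shy z)) - f z)
    = ((1 - I)⁻¹ : ℂ) • (f (shx z) - f (shy z))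

/-- A discrete analytic function f : Λ₊ → ℂ^{m×k} is rational if it admits a
system realization: (δ_x f)(z) = C·e_A(z)·B with det(1+α₊A) ≠ 0 and
det(1+α₋A) ≠ 0. -/
def IsRatDA {m k : ℕ} (f : Lp → Matrix (Fin m) (Fin k) ℂ) : Prop :=
  ∃ (N : ℕ) (A : Matrix (Fin N) (Fin N) ℂ) (B : Matrix (Fin N) (Fin k) ℂ)
    (C : Matrix (Fin m) (Fin N) ℂ),
    (1 + ap • A).det ≠ 0 ∧ (1 + am • A).det ≠ 0 ∧
    ∀ z : Lp, dxV f z = C * eMat A z * B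

/-! ### Scalar lemmas -/

lemma inv_onePlusI : ((1 + I)⁻¹ : ℂ) = am := by
  rw [am, eq_div_iff (by norm_num : (2:ℂ) ≠ 0)]
  rw [inv_mul_eq_div, div_eq_iff (by norm_num [Complex.ext_iff] : (1 + I : ℂ) ≠ 0)]
  norm_num [Complex.ext_iff]

lemma inv_oneSubI : ((1 - I)⁻¹ : ℂ) = ap := by
  rw [ap, eq_div_iff (by norm_num : (2:ℂ) ≠ 0)]
  rw [inv_mul_eq_div, div_eq_iff (by norm_num [Complex.ext_iff] : (1 - I : ℂ) ≠ 0)]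
  norm_num [Complex.ext_iff]

lemma am_add_ap : am + ap = 1 := by simp [am, ap]; ring

lemma ap_ne_zero : ap ≠ 0 := by simp [ap, Complex.ext_iff]
lemma am_ne_zero : am ≠ 0 := by simp [am, Complex.ext_iff]

/-- the bad value for ap -/
lemma one_add_ap_bad : 1 + ap * (-(1 - I)) = 0 := by
  simp [ap]; field_simp; ring_nf; norm_num [Complex.ext_iff]

lemma one_add_am_bad : 1 + am * (-(1 + I)) = 0 := by
  simp [am]; field_simp; ring_nf; norm_num [Complex.ext_iff]

lemma one_add_am_bad1 : 1 + am * (-(1 - I)) = 1 + I := by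
  simp [am]; field_simp; ring_nf; norm_num [Complex.ext_iff]

lemma one_add_ap_bad2 : 1 + ap * (-(1 + I)) = 1 - I := by
  simp [ap]; field_simp; ring_nf; norm_num [Complex.ext_iff]

lemma onePlusI_ne : (1 + I : ℂ) ≠ 0 := by norm_num [Complex.ext_iff]
lemma oneSubI_ne : (1 - I : ℂ) ≠ 0 := by norm_num [Complex.ext_iff]

/-- if λ ≠ -(1-I) then 1 + ap*λ ≠ 0 -/
lemma one_add_ap_ne {l : ℂ} (h : l ≠ -(1 - I)) : 1 + ap * l ≠ 0 := by
  intro hc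
  apply h
  have h2 : ap * l = ap * (-(1-I)) := by
    have := one_add_ap_bad
    linear_combination hc - this
  exact mul_left_cancel₀ ap_ne_zero h2

lemma one_add_am_ne {l : ℂ} (h : l ≠ -(1 + I)) : 1 + am * l ≠ 0 := by
  intro hc
  apply h
  have h2 : am * l = am * (-(1+I)) := by
    have := one_add_am_bad
    linear_combination hc - this
  exact mul_left_cancel₀ am_ne_zero h2

/-! ### Lattice lemmas -/

lemma shx_shy_comm (z : Lp) : shx (shy z) = shy (shx z) := by
  apply Subtype.ext
  show z.1 + Ii + 1 = z.1 + 1 + Ii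
  ring

lemma shy_surj (z : Lp) : ∃ w : Lp, shy w = z := by
  refine ⟨⟨z.1 - Ii, ?_⟩, ?_⟩
  · have := z.2; simpa [Zsqrtd.re_sub, Ii] using this
  · apply Subtype.ext; show z.1 - Ii + Ii = z.1; ring

/-- mk point -/
def mkLp (x y : ℤ) (h : 0 ≤ x) : Lp := ⟨⟨x, y⟩, h⟩

lemma shx_mkLp (x y : ℤ) (h : 0 ≤ x) : shx (mkLp x y h) = mkLp (x+1) y (by omega) := by
  apply Subtype.ext
  show (⟨x, y⟩ : GI) + 1 = ⟨x+1, y⟩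
  ext <;> simp [Zsqrtd.re_add, Zsqrtd.im_add]

lemma shy_mkLp (x y : ℤ) (h : 0 ≤ x) : shy (mkLp x y h) = mkLp x (y+1) h := by
  apply Subtype.ext
  show (⟨x, y⟩ : GI) + Ii = ⟨x, y+1⟩
  ext <;> simp [Ii, Zsqrtd.re_add, Zsqrtd.im_add]

lemma pt0_eq : pt0 = mkLp 0 0 (le_refl 0) := by
  apply Subtype.ext
  show (0 : GI) = ⟨0, 0⟩
  ext <;> simp

/-- Induction principle on the half-lattice. -/
lemma Lp.ind (P : Lp → Prop) (h0 : P pt0) (hx : ∀ z, P z → P (shx z))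
    (hy : ∀ z, P z ↔ P (shy z)) : ∀ z, P z := by
  have col : ∀ y : ℤ, P (mkLp 0 y (le_refl 0)) := by
    intro y
    induction y using Int.induction_on with
    | zero => rw [← pt0_eq]; exact h0
    | succ n ih => have := (hy _).mp ih; rwa [shy_mkLp] at this
    | pred n ih =>
        apply (hy _).mpr
        rw [shy_mkLp]
        convert ih using 2
        omega
  intro z
  obtain ⟨⟨x, y⟩, hz⟩ := z
  have key : ∀ x : ℤ, 0 ≤ x → ∀ h : 0 ≤ x, ∀ y : ℤ, P (mkLp x y h) := by
    refine Int.le_induction ?_ ?_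
    · intro _ y; exact col y
    · intro n hn ih h y
      have := hx _ (ih hn y)
      rwa [shx_mkLp] at this
  exact key x hz hz y
/-! ### Discrete analyticity, the linear difference operator -/

section DAV
variable {V : Type*} [AddCommGroup V] [Module ℂ V]

/-- δ_x as a linear map. -/
def Dop : (Lp → V) →ₗ[ℂ] (Lp → V) where
  toFun := dxV
  map_add' g h := by funext z; simp [dxV]; abel
  map_smul' c g := by funext z; simp [dxV, smul_sub]

lemma Dop_apply (g : Lp → V) (z : Lp) : Dop g z = g (shx z) - g z := rfl

lemma dxV_eq_Dop (g : Lp → V) : dxV g = Dop (V := V) g := rfl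

lemma DApV_zero : DApV (0 : Lp → V) := by intro z; simp

lemma DApV_add {g h : Lp → V} (hg : DApV g) (hh : DApV h) : DApV (g + h) := by
  intro z
  simp only [Pi.add_apply]
  linear_combination (norm := module) hg z + hh z

lemma DApV_smul {g : Lp → V} (c : ℂ) (hg : DApV g) : DApV (c • g) := by
  intro z
  simp only [Pi.smul_apply]
  linear_combination (norm := module) c • hg z

lemma DApV_sum {ι : Type*} (s : Finset ι) (g : ι → Lp → V) (hg : ∀ i ∈ s, DApV (g i)) :
    DApV (∑ i ∈ s, g i) := by
  classical
  induction s using Finset.induction_on with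
  | empty => simpa using DApV_zero
  | insert _ _ hni ih =>
      rename_i a s'
      rw [Finset.sum_insert hni]
      exact DApV_add (hg a (Finset.mem_insert_self a s'))
        (ih fun i hi => hg i (Finset.mem_insert_of_mem hi))

lemma DApV_dxV {g : Lp → V} (hg : DApV g) : DApV (Dop g) := by
  intro z
  have h1 := hg z
  have h2 := hg (shx z)
  simp only [Dop_apply]
  rw [shx_shy_comm z] at h1
  rw [shx_shy_comm z]
  linear_combination (norm := module) h2 - h1

lemma DApV_pow_dxV {g : Lp → V} (hg : DApV g) (n : ℕ) : DApV ((Dop ^ n) g) := by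
  induction n with
  | zero => simpa using hg
  | succ n ih => rw [pow_succ', Module.End.mul_apply]; exact DApV_dxV ih

omit [AddCommGroup V] [Module ℂ V] in
/-- Constancy: a function invariant under both shifts is constant. -/
lemma const_of_invariant (g : Lp → V) (hx : ∀ z, g (shx z) = g z)
    (hy : ∀ z, g (shy z) = g z) : ∀ z, g z = g pt0 := by
  apply Lp.ind (fun z => g z = g pt0)
  · rfl
  · intro z h; rw [hx z]; exact h
  · intro z; rw [hy z]

/-- Uniqueness: a discrete analytic function with zero δ_x and zero value at 0
is zero. -/
lemma zero_of_DA_dx_zero {g : Lp → V} (hg : DApV g) (hdx : ∀ z, Dop g z = 0)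
    (h0 : g pt0 = 0) : ∀ z, g z = 0 := by
  have hx : ∀ z, g (shx z) = g z := by
    intro z; have := hdx z; rw [Dop_apply, sub_eq_zero] at this; exact this
  have hy : ∀ z, g (shy z) = g z := by
    intro z
    have h1 := hg z
    rw [hx (shy z), hx z] at h1
    have h2 : ((1 + I)⁻¹ + (1 - I)⁻¹ : ℂ) • (g (shy z) - g z) = 0 := by
      linear_combination (norm := module) h1
    rw [inv_onePlusI, inv_oneSubI, am_add_ap, one_smul, sub_eq_zero] at h2
    exact h2
  intro z
  rw [const_of_invariant g hx hy z, h0]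

end DAV
/-! ### Discrete analytic polynomials -/

section Poly
variable {V : Type*} [AddCommGroup V] [Module ℂ V]
variable {p : ℕ → Lp → ℂ} (hp : IsStdBasisP p)

lemma DApV_sum' {ι : Type*} (s : Finset ι) (F : ι → Lp → V) (h : ∀ i ∈ s, DApV (F i)) :
    DApV (fun z => ∑ i ∈ s, F i z) := by
  have he : (fun z => ∑ i ∈ s, F i z) = ∑ i ∈ s, F i := by
    funext z; simp
  rw [he]; exact DApV_sum s F h

include hp

lemma DApV_p_smul (n : ℕ) (B : V) : DApV (fun z => p n z • B) := by
  intro z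
  have h := hp.1 n z
  rw [div_eq_inv_mul, div_eq_inv_mul] at h
  simp only
  rw [← sub_smul, ← sub_smul, smul_smul, smul_smul, h]

lemma p_succ_shx (n : ℕ) (z : Lp) : p (n + 1) (shx z) = p (n + 1) z + p n z := by
  have h := congrFun (hp.2.2.2 n) z
  rw [dxp] at h
  linear_combination h

lemma Dop_p_succ_smul (n : ℕ) (B : V) :
    Dop (fun z => p (n + 1) z • B) = fun z => p n z • B := by
  funext z
  rw [Dop_apply, p_succ_shx hp]
  rw [add_smul]
  abel

lemma Dop_p_zero_smul (B : V) : Dop (fun z => p 0 z • B) = 0 := by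
  funext z
  rw [Dop_apply, hp.2.1, hp.2.1, sub_self]
  rfl

lemma Dop_pow_p_smul (l : ℕ) (B : V) :
    (Dop ^ (l + 1)) (fun z => p l z • B) = 0 := by
  induction l with
  | zero => rw [pow_one, Dop_p_zero_smul hp]
  | succ l ih =>
      rw [pow_succ, Module.End.mul_apply, Dop_p_succ_smul hp, ih]

/-- A discrete analytic function killed by a power of δ_x is a polynomial. -/
lemma polyRep : ∀ (M : ℕ) (g : Lp → V), DApV g → (Dop ^ (M + 1)) g = 0 →
    ∃ B : ℕ → V, ∀ z, g z = ∑ l ∈ Finset.range (M + 1), p l z • B l := by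
  intro M
  induction M with
  | zero =>
      intro g hg hD
      refine ⟨fun _ => g pt0, ?_⟩
      intro z
      rw [pow_one] at hD
      have key := zero_of_DA_dx_zero (g := fun z => g z - g pt0)
        (by intro w; linear_combination (norm := module) hg w)
        (by intro w
            have : Dop g w = 0 := by rw [hD]; rfl
            rw [Dop_apply] at this ⊢
            linear_combination (norm := module) this)
        (by simp)
      have hz := key z
      simp only [sub_eq_zero] at hz
      rw [Finset.sum_range_one, hp.2.1, one_smul]
      exact hz
  | succ M ih =>
      intro g hg hD
      have hDg : (Dop ^ (M + 1)) (Dop g) = 0 := by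
        rw [← Module.End.mul_apply, ← pow_succ]
        exact hD
      obtain ⟨B, hB⟩ := ih (Dop g) (DApV_dxV hg) hDg
      set G : Lp → V :=
        fun z => p 0 z • g pt0 + ∑ l ∈ Finset.range (M + 1), p (l + 1) z • B l with hGdef
      have hGDA : DApV G :=
        DApV_add (DApV_p_smul hp 0 _) (DApV_sum' _ _ (fun l _ => DApV_p_smul hp (l+1) _))
      have hdz : ∀ z, Dop G z = Dop g z := by
        intro z
        rw [Dop_apply, hGdef]
        simp only [hp.2.1, p_succ_shx hp, add_smul, Finset.sum_add_distrib]
        rw [hB z]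
        abel
      have key := zero_of_DA_dx_zero (g := fun z => g z - G z)
        (by intro w; linear_combination (norm := module) hg w - hGDA w)
        (by intro w
            rw [Dop_apply]
            have h1 := hdz w
            rw [Dop_apply, Dop_apply] at h1
            linear_combination (norm := module) - h1)
        (by simp only [hGdef, hp.2.1, hp.2.2.1, one_smul, zero_smul, Finset.sum_const_zero,
              add_zero, sub_self])
      refine ⟨fun l => if l = 0 then g pt0 else B (l - 1), ?_⟩
      intro z
      have hz := key z
      rw [sub_eq_zero] at hz
      rw [hz, hGdef, Finset.sum_range_succ']
      simp only [Nat.add_sub_cancel, if_neg (Nat.succ_ne_zero _), reduceIte]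
      rw [add_comm]

end Poly
/-! ### The matrix exponential eMat -/

section EM
variable {ι : Type*} [Fintype ι] [DecidableEq ι]

/-- eMat for a general index type. -/
def eMatI (A : Matrix ι ι ℂ) (z : Lp) : Matrix ι ι ℂ :=
  (1 + A) ^ z.1.re.toNat * (1 + ap • A) ^ (z.1.im : ℤ) * (1 + am • A) ^ (-(z.1.im : ℤ))

lemma eMat_eq_eMatI {N : ℕ} (A : Matrix (Fin N) (Fin N) ℂ) (z : Lp) :
    eMat A z = eMatI A z := rfl

lemma shx_re (z : Lp) : (shx z).1.re = z.1.re + 1 := by simp [shx, Zsqrtd.re_add]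
lemma shx_im (z : Lp) : (shx z).1.im = z.1.im := by simp [shx, Zsqrtd.im_add]
lemma shy_re (z : Lp) : (shy z).1.re = z.1.re := by simp [shy, Ii, Zsqrtd.re_add]
lemma shy_im (z : Lp) : (shy z).1.im = z.1.im + 1 := by simp [shy, Ii, Zsqrtd.im_add]

lemma pt0_re : (pt0 : Lp).1.re = 0 := rfl
lemma pt0_im : (pt0 : Lp).1.im = 0 := rfl

variable (A : Matrix ι ι ℂ)

lemma commute_poly (c d : ℂ) : Commute (1 + c • A) (1 + d • A) := by
  have c0 : ∀ e : ℂ, Commute A (1 + e • A) := fun e =>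
    ((Commute.one_right A).add_right ((Commute.refl A).smul_right e))
  exact ((Commute.one_left _).add_left ((c0 d).smul_left c))

lemma commute_oneAdd (c : ℂ) : Commute (1 + A) (1 + c • A) := by
  have := commute_poly A 1 c
  rwa [one_smul] at this

lemma eMatI_pt0 : eMatI A pt0 = 1 := by
  rw [eMatI, pt0_re, pt0_im]
  norm_num

lemma eMatI_shx (z : Lp) : eMatI A (shx z) = (1 + A) * eMatI A z := by
  rw [eMatI, eMatI, shx_re, shx_im,
    show (z.1.re + 1).toNat = z.1.re.toNat + 1 by have := z.2; omega,
    pow_succ']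
  rw [mul_assoc, mul_assoc, mul_assoc]

omit [DecidableEq ι] in
lemma comm_shift {a b c : Matrix ι ι ℂ} (h : Commute a b) : a * (b * c) = b * (a * c) := by
  rw [← mul_assoc, h.eq, mul_assoc]

lemma eMatI_shy (hdp : IsUnit (1 + ap • A).det) (hdm : IsUnit (1 + am • A).det) (z : Lp) :
    (1 + am • A) * eMatI A (shy z) = (1 + ap • A) * eMatI A z := by
  set X := 1 + A with hX
  set P := 1 + ap • A with hP
  set Q := 1 + am • A with hQ
  have cXP : Commute X P := commute_oneAdd A ap
  have cXQ : Commute X Q := commute_oneAdd A am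
  have cPQ : Commute P Q := commute_poly A ap am
  have cQXn : Commute Q (X ^ z.1.re.toNat) := cXQ.symm.pow_right _
  have cQPy : Commute Q (P ^ (z.1.im : ℤ)) := Matrix.Commute.zpow_right cPQ.symm _
  have cQQy : Commute Q ((Q:Matrix ι ι ℂ) ^ (-z.1.im : ℤ)) :=
    Matrix.Commute.zpow_right (Commute.refl Q) _
  have cQP : Commute Q P := cPQ.symm
  have cPXn : Commute P (X ^ z.1.re.toNat) := cXP.symm.pow_right _
  have cPPy : Commute P ((P:Matrix ι ι ℂ) ^ (z.1.im : ℤ)) :=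
    Matrix.Commute.zpow_right (Commute.refl P) _
  rw [eMatI, eMatI, shy_re, shy_im]
  rw [Matrix.zpow_add_one hdp, show (-(z.1.im + 1) : ℤ) = -z.1.im - 1 by ring,
    Matrix.zpow_sub_one hdm]
  simp only [mul_assoc]
  rw [comm_shift cQXn, comm_shift cQPy, comm_shift cQP, comm_shift cQQy,
    Matrix.mul_nonsing_inv _ hdm, mul_one, comm_shift cPXn, comm_shift cPPy]

lemma commute_eMatI : Commute A (eMatI A z) := by
  have c0 : ∀ e : ℂ, Commute A (1 + e • A) := fun e =>
    ((Commute.one_right A).add_right ((Commute.refl A).smul_right e))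
  have c1 : Commute A (1 + A) := by have := c0 1; rwa [one_smul] at this
  exact ((c1.pow_right _).mul_right (Matrix.Commute.zpow_right (c0 ap) _)).mul_right
    (Matrix.Commute.zpow_right (c0 am) _)

end EM
/-! ### Z iterates and the forward direction -/

section Fwd
variable {m k : ℕ} {f : Lp → Matrix (Fin m) (Fin k) ℂ} (hf : DApV f)
  {Z : (Lp → Matrix (Fin m) (Fin k) ℂ) → (Lp → Matrix (Fin m) (Fin k) ℂ)}
  (hZ : ∀ g, DApV g → DApV (Z g) ∧ Z g pt0 = 0 ∧ dxV (Z g) = g)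

include hf hZ

lemma Z_iter_DA : ∀ j, DApV (Z^[j] f) := by
  intro j
  induction j with
  | zero => simpa using hf
  | succ j ih =>
      rw [Function.iterate_succ_apply']
      exact (hZ _ ih).1

lemma Z_iter_dx : ∀ j, (Dop ^ j) (Z^[j] f) = f := by
  intro j
  induction j with
  | zero => simp
  | succ j ih =>
      rw [Function.iterate_succ_apply', pow_succ, Module.End.mul_apply]
      have h := (hZ _ (Z_iter_DA hf hZ j)).2.2
      rw [dxV_eq_Dop] at h
      rw [h, ih]

end Fwd

section FwdMain
variable {m k N : ℕ} (A : Matrix (Fin N) (Fin N) ℂ)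
  (C : Matrix (Fin m) (Fin N) ℂ) (B : Matrix (Fin N) (Fin k) ℂ)

lemma Dop_CeB (M : Matrix (Fin m) (Fin N) ℂ) :
    Dop (fun z => M * eMatI A z * B) = fun z => (M * A) * eMatI A z * B := by
  funext z
  rw [Dop_apply, eMatI_shx, ← Matrix.mul_assoc M (1 + A) _, Matrix.mul_add, Matrix.mul_one,
    Matrix.add_mul, Matrix.add_mul]
  abel

lemma Dop_pow_CeB (r : ℕ) :
    (Dop ^ r) (fun z => C * eMatI A z * B) = fun z => (C * A ^ r) * eMatI A z * B := by
  induction r with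
  | zero => simp
  | succ r ih =>
      rw [pow_succ', Module.End.mul_apply, ih, Dop_CeB]
      funext z
      rw [Matrix.mul_assoc C _ A, ← pow_succ]

/-- Forward direction of the theorem. -/
lemma forwardDir (f : Lp → Matrix (Fin m) (Fin k) ℂ) (hf : DApV f)
    (p : ℕ → Lp → ℂ) (hp : IsStdBasisP p)
    (Z : (Lp → Matrix (Fin m) (Fin k) ℂ) → (Lp → Matrix (Fin m) (Fin k) ℂ))
    (hZ : ∀ g, DApV g → DApV (Z g) ∧ Z g pt0 = 0 ∧ dxV (Z g) = g)
    (hreal : ∀ z : Lp, dxV f z = C * eMat A z * B) :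
    ∃ (N' : ℕ) (a : ℕ → ℂ), (∃ j ≤ N', a j ≠ 0) ∧
      ∃ (M : ℕ) (Bp : ℕ → Matrix (Fin m) (Fin k) ℂ),
        ∀ z : Lp, ∑ j ∈ Finset.range (N' + 1), a j • (Z^[j] f) z
          = ∑ l ∈ Finset.range (M + 1), p l z • Bp l := by
  classical
  set a : ℕ → ℂ := fun j => (A.charpoly).coeff (N - j) with ha
  have hdeg : A.charpoly.natDegree = N := by
    rw [Matrix.charpoly_natDegree_eq_dim, Fintype.card_fin]
  have ha0 : a 0 = 1 := by
    have := (Matrix.charpoly_monic A).coeff_natDegree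
    simpa [ha, hdeg] using this
  set G : Lp → Matrix (Fin m) (Fin k) ℂ :=
    ∑ j ∈ Finset.range (N + 1), a j • (Z^[j] f) with hG
  have hGDA : DApV G :=
    DApV_sum _ _ (fun j _ => DApV_smul _ (Z_iter_DA hf hZ j))
  have hDf : Dop f = fun z => C * eMatI A z * B := by
    funext z
    have := hreal z
    rw [dxV_eq_Dop] at this
    rw [this, eMat_eq_eMatI]
  have hkey : ∀ j ∈ Finset.range (N + 1),
      (Dop ^ (N + 1)) ((a j • (Z^[j] f) : Lp → Matrix (Fin m) (Fin k) ℂ))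
        = a j • fun z => (C * A ^ (N - j)) * eMatI A z * B := by
    intro j hj
    have hjN : j ≤ N := by simpa using Nat.lt_succ_iff.mp (Finset.mem_range.mp hj)
    rw [map_smul]
    congr 1
    have hsplit : N + 1 = (N - j) + 1 + j := by omega
    rw [hsplit, pow_add, Module.End.mul_apply, Z_iter_dx hf hZ j]
    rw [pow_succ, Module.End.mul_apply, hDf]
    exact Dop_pow_CeB A C B (N - j)
  have hzero : (Dop ^ (N + 1)) G = 0 := by
    rw [hG, map_sum, Finset.sum_congr rfl hkey]
    funext z
    simp only [Finset.sum_apply, Pi.smul_apply, Pi.zero_apply]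
    have hterm : ∀ j ∈ Finset.range (N+1),
        a j • ((C * A ^ (N - j)) * eMatI A z * B)
          = (C * (a j • A ^ (N - j))) * (eMatI A z * B) := by
      intro j _
      simp only [Matrix.mul_smul, Matrix.smul_mul, Matrix.mul_assoc]
    rw [Finset.sum_congr rfl hterm, ← Matrix.sum_mul, ← Matrix.mul_sum]
    have hsum : ∑ j ∈ Finset.range (N + 1), a j • A ^ (N - j) = 0 := by
      have hre : ∑ j ∈ Finset.range (N + 1), a j • A ^ (N - j)
          = ∑ i ∈ Finset.range (N + 1), A.charpoly.coeff i • A ^ i := by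
        rw [← Finset.sum_range_reflect (fun i => A.charpoly.coeff i • A ^ i) (N+1)]
        apply Finset.sum_congr rfl
        intro j hj
        have : N + 1 - 1 - j = N - j := by omega
        rw [this]
      have haev : ∑ i ∈ Finset.range (N + 1), A.charpoly.coeff i • A ^ i
          = Polynomial.aeval A A.charpoly := by
        rw [Polynomial.aeval_eq_sum_range, hdeg]
      rw [hre, haev, Matrix.aeval_self_charpoly]
    rw [hsum]
    simp
  obtain ⟨Bp, hBp⟩ := polyRep hp N G hGDA hzero
  refine ⟨N, a, ⟨0, Nat.zero_le N, by rw [ha0]; exact one_ne_zero⟩, N, Bp, ?_⟩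
  intro z
  have : ∑ j ∈ Finset.range (N + 1), a j • (Z^[j] f) z = G z := by
    rw [hG]; simp [Finset.sum_apply]
  rw [this, hBp z]

end FwdMain
/-! ### Operator polynomials and root removal -/

section OpPoly
variable {V : Type*} [AddCommGroup V] [Module ℂ V]

lemma DA_aeval {v : Lp → V} (hv : DApV v) (q : Polynomial ℂ) :
    DApV (Polynomial.aeval (Dop (V := V)) q v) := by
  rw [Polynomial.aeval_eq_sum_range, LinearMap.sum_apply]
  apply DApV_sum
  intro i _
  rw [LinearMap.smul_apply]
  exact DApV_smul _ (DApV_pow_dxV hv i)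

/-- The scalar discrete CR relation for an eigenfunction of δ_x. -/
lemma scalar_CR {w : Lp → V} (hw : DApV w) {l : ℂ}
    (hx : ∀ z, Dop w z = l • w z) :
    ∀ z, (1 + am * l) • w (shy z) = (1 + ap * l) • w z := by
  have hxx : ∀ z, w (shx z) = w z + l • w z := by
    intro z
    have := hx z
    rw [Dop_apply] at this
    linear_combination (norm := module) this
  intro z
  have h := hw z
  rw [hxx (shy z), hxx z, inv_onePlusI, inv_oneSubI] at h
  simp only [am, ap] at h ⊢
  linear_combination (norm := module) h

omit [Module ℂ V] in
lemma zero_of_shy_zero {w : Lp → V} (h : ∀ z, w (shy z) = 0) : ∀ z, w z = 0 := by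
  intro z
  obtain ⟨z', hz'⟩ := shy_surj z
  rw [← hz', h]

/-- Root removal: from a nonzero annihilating operator polynomial we can obtain
one avoiding the two bad roots. -/
lemma rootRemove {v : Lp → V} (hv : DApV v) :
    ∀ (n : ℕ) (q : Polynomial ℂ), q.natDegree ≤ n → q ≠ 0 →
      Polynomial.aeval (Dop (V := V)) q v = 0 →
      ∃ q' : Polynomial ℂ, q' ≠ 0 ∧ q'.eval (-(1 - I)) ≠ 0 ∧ q'.eval (-(1 + I)) ≠ 0 ∧
        Polynomial.aeval (Dop (V := V)) q' v = 0 := by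
  intro n
  induction n with
  | zero =>
      intro q hdeg hne hav
      refine ⟨q, hne, ?_, ?_, hav⟩ <;>
      · rw [Polynomial.eq_C_of_natDegree_eq_zero (Nat.le_zero.mp hdeg), Polynomial.eval_C]
        intro hc
        apply hne
        rw [Polynomial.eq_C_of_natDegree_eq_zero (Nat.le_zero.mp hdeg), hc, map_zero]
  | succ n ih =>
      intro q hdeg hne hav
      by_cases h1 : q.eval (-(1 - I)) = 0
      · obtain ⟨q₂, hq₂⟩ := Polynomial.dvd_iff_isRoot.mpr h1
        have hq₂ne : q₂ ≠ 0 := by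
          rintro rfl
          rw [mul_zero] at hq₂
          exact hne hq₂
        set w := Polynomial.aeval (Dop (V := V)) q₂ v with hw
        have hwDA : DApV w := DA_aeval hv q₂
        have hDw : ∀ z, Dop w z = (-(1 - I)) • w z := by
          intro z
          have happ : Polynomial.aeval (Dop (V := V)) q v
              = Dop w - (-(1 - I)) • w := by
            rw [hq₂, map_mul, Module.End.mul_apply, ← hw, map_sub, Polynomial.aeval_X,
              Polynomial.aeval_C, Algebra.algebraMap_eq_smul_one, LinearMap.sub_apply,
              LinearMap.smul_apply, Module.End.one_apply]
          rw [hav] at happ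
          have := congrFun happ.symm z
          simp only [Pi.zero_apply, Pi.sub_apply, Pi.smul_apply] at this
          linear_combination (norm := module) this
        have hCR := scalar_CR hwDA hDw
        have hshy : ∀ z, w (shy z) = 0 := by
          intro z
          have := hCR z
          rw [one_add_ap_bad, one_add_am_bad1, zero_smul, smul_eq_zero] at this
          exact this.resolve_left onePlusI_ne
        have hw0 : Polynomial.aeval (Dop (V := V)) q₂ v = 0 :=
          funext (zero_of_shy_zero hshy)
        have hdeg2 : q₂.natDegree ≤ n := by
          have hXC : (Polynomial.X - Polynomial.C (-(1 - I)) : Polynomial ℂ) ≠ 0 :=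
            Polynomial.X_sub_C_ne_zero _
          have := Polynomial.natDegree_mul hXC hq₂ne
          rw [← hq₂, Polynomial.natDegree_X_sub_C] at this
          omega
        exact ih q₂ hdeg2 hq₂ne hw0
      · by_cases h2 : q.eval (-(1 + I)) = 0
        · obtain ⟨q₂, hq₂⟩ := Polynomial.dvd_iff_isRoot.mpr h2
          have hq₂ne : q₂ ≠ 0 := by
            rintro rfl
            rw [mul_zero] at hq₂
            exact hne hq₂
          set w := Polynomial.aeval (Dop (V := V)) q₂ v with hw
          have hwDA : DApV w := DA_aeval hv q₂
          have hDw : ∀ z, Dop w z = (-(1 + I)) • w z := by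
            intro z
            have happ : Polynomial.aeval (Dop (V := V)) q v
                = Dop w - (-(1 + I)) • w := by
              rw [hq₂, map_mul, Module.End.mul_apply, ← hw, map_sub, Polynomial.aeval_X,
                Polynomial.aeval_C, Algebra.algebraMap_eq_smul_one, LinearMap.sub_apply,
                LinearMap.smul_apply, Module.End.one_apply]
            rw [hav] at happ
            have := congrFun happ.symm z
            simp only [Pi.zero_apply, Pi.sub_apply, Pi.smul_apply] at this
            linear_combination (norm := module) this
          have hCR := scalar_CR hwDA hDw
          have hw0 : Polynomial.aeval (Dop (V := V)) q₂ v = 0 := by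
            funext z
            have h3 := hCR z
            rw [one_add_am_bad, zero_smul, one_add_ap_bad2] at h3
            have h4 : w z = 0 := by
              have h5 := h3.symm
              rw [smul_eq_zero] at h5
              exact h5.resolve_left oneSubI_ne
            simpa using h4
          have hdeg2 : q₂.natDegree ≤ n := by
            have hXC : (Polynomial.X - Polynomial.C (-(1 + I)) : Polynomial ℂ) ≠ 0 :=
              Polynomial.X_sub_C_ne_zero _
            have := Polynomial.natDegree_mul hXC hq₂ne
            rw [← hq₂, Polynomial.natDegree_X_sub_C] at this
            omega
          exact ih q₂ hdeg2 hq₂ne hw0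
        · exact ⟨q, hne, h1, h2, hav⟩

end OpPoly
/-! ### Solving the system: u(z) = e_A(z) u(0) -/

section Solve
variable {ι : Type*} [Fintype ι] [DecidableEq ι] {k : ℕ}

/-- The matrix discrete CR relation. -/
lemma matrix_CR {u : Lp → Matrix ι (Fin k) ℂ} {A : Matrix ι ι ℂ}
    (hu : DApV u) (hx : ∀ z, u (shx z) = (1 + A) * u z) :
    ∀ z, (1 + am • A) * u (shy z) = (1 + ap • A) * u z := by
  intro z
  have h := hu z
  rw [hx (shy z), hx z, inv_onePlusI, inv_oneSubI] at h
  simp only [Matrix.add_mul, Matrix.one_mul, Matrix.smul_mul] at h ⊢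
  simp only [am, ap] at h ⊢
  linear_combination (norm := module) h

lemma solve_system {u : Lp → Matrix ι (Fin k) ℂ} {A : Matrix ι ι ℂ}
    (hdp : IsUnit (1 + ap • A).det) (hdm : IsUnit (1 + am • A).det)
    (hx : ∀ z, u (shx z) = (1 + A) * u z)
    (hy : ∀ z, (1 + am • A) * u (shy z) = (1 + ap • A) * u z) :
    ∀ z, u z = eMatI A z * u pt0 := by
  apply Lp.ind (fun z => u z = eMatI A z * u pt0)
  · rw [eMatI_pt0, Matrix.one_mul]
  · intro z h
    rw [hx z, h, eMatI_shx, Matrix.mul_assoc]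
  · intro z
    have huy : u (shy z) = (1 + am • A)⁻¹ * ((1 + ap • A) * u z) := by
      rw [← hy z, ← Matrix.mul_assoc, Matrix.nonsing_inv_mul _ hdm, Matrix.one_mul]
    have hey : eMatI A (shy z) = (1 + am • A)⁻¹ * ((1 + ap • A) * eMatI A z) := by
      rw [← eMatI_shy A hdp hdm z, ← Matrix.mul_assoc, Matrix.nonsing_inv_mul _ hdm,
        Matrix.one_mul]
    constructor
    · intro h
      rw [huy, h, hey, Matrix.mul_assoc, Matrix.mul_assoc]
    · intro h
      rw [huy, hey, Matrix.mul_assoc, Matrix.mul_assoc] at h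
      have h2 := congrArg (fun X => (1 + am • A) * X) h
      simp only [← Matrix.mul_assoc, Matrix.mul_nonsing_inv _ hdm, Matrix.one_mul] at h2
      have h3 := congrArg (fun X => (1 + ap • A)⁻¹ * X) h2
      simp only [← Matrix.mul_assoc, Matrix.nonsing_inv_mul _ hdp, Matrix.one_mul] at h3
      exact h3

/-! ### Transport along an index equivalence -/

variable {κ : Type*} [Fintype κ] [DecidableEq κ]

lemma submatrix_pow (A : Matrix ι ι ℂ) (e : κ ≃ ι) (n : ℕ) :
    (A.submatrix ⇑e ⇑e) ^ n = (A ^ n).submatrix ⇑e ⇑e := by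
  induction n with
  | zero => simp [Matrix.submatrix_one_equiv]
  | succ n ih => rw [pow_succ, pow_succ, ih, Matrix.submatrix_mul_equiv]

lemma submatrix_zpow (A : Matrix ι ι ℂ) (e : κ ≃ ι) (n : ℤ) :
    (A.submatrix ⇑e ⇑e) ^ n = (A ^ n).submatrix ⇑e ⇑e := by
  cases n with
  | ofNat n => rw [Int.ofNat_eq_coe, zpow_natCast, zpow_natCast, submatrix_pow]
  | negSucc n => rw [zpow_negSucc, zpow_negSucc, submatrix_pow, Matrix.inv_submatrix_equiv]

omit [Fintype ι] [Fintype κ] in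
lemma submatrix_oneAdd (A : Matrix ι ι ℂ) (e : κ ≃ ι) (c : ℂ) :
    (1 : Matrix κ κ ℂ) + c • A.submatrix ⇑e ⇑e = ((1 + c • A).submatrix ⇑e ⇑e) := by
  ext i j
  simp [Matrix.one_apply, Equiv.apply_eq_iff_eq]

omit [Fintype ι] [Fintype κ] in
lemma submatrix_oneAdd' (A : Matrix ι ι ℂ) (e : κ ≃ ι) :
    (1 : Matrix κ κ ℂ) + A.submatrix ⇑e ⇑e = ((1 + A).submatrix ⇑e ⇑e) := by
  ext i j
  simp [Matrix.one_apply, Equiv.apply_eq_iff_eq]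

lemma eMatI_submatrix (A : Matrix ι ι ℂ) (e : κ ≃ ι) (z : Lp) :
    eMatI (A.submatrix ⇑e ⇑e) z = (eMatI A z).submatrix ⇑e ⇑e := by
  rw [eMatI, eMatI, submatrix_oneAdd', submatrix_oneAdd, submatrix_oneAdd,
    submatrix_pow, submatrix_zpow, submatrix_zpow,
    Matrix.submatrix_mul_equiv, Matrix.submatrix_mul_equiv]

end Solve
/-! ### Realization from a clean annihilating polynomial -/

section Realize
open Polynomial Kronecker
variable {m k : ℕ}

lemma list_map_prod_range (g : ℂ → Polynomial ℂ) (l : List ℂ) :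
    (l.map g).prod = ∏ t ∈ Finset.range l.length, g (l.getD t 0) := by
  induction l with
  | nil => simp
  | cons a l ih =>
      simp only [List.map_cons, List.prod_cons, List.length_cons]
      rw [Finset.prod_range_succ']
      simp only [List.getD_cons_succ, List.getD_cons_zero]
      rw [← ih, mul_comm]

lemma mul_empty_zero (Cm : Matrix (Fin m) (Fin 0) ℂ) (X : Matrix (Fin 0) (Fin 0) ℂ)
    (Bm : Matrix (Fin 0) (Fin k) ℂ) : Cm * X * Bm = 0 := by
  ext i j
  rw [Matrix.mul_apply]
  simp

lemma realize (f : Lp → Matrix (Fin m) (Fin k) ℂ) (hf : DApV f) (q : Polynomial ℂ)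
    (hq : q ≠ 0) (h1 : q.eval (-(1 - I)) ≠ 0) (h2 : q.eval (-(1 + I)) ≠ 0)
    (hqv : Polynomial.aeval (Dop (V := Matrix (Fin m) (Fin k) ℂ)) q f = 0) :
    IsRatDA f := by
  classical
  -- roots of q
  have hsplit : q.Splits := IsAlgClosed.splits q
  have hcard : Multiset.card q.roots = q.natDegree := Polynomial.splits_iff_card_roots.mp hsplit
  set l : List ℂ := q.roots.toList with hl
  have hlen : l.length = q.natDegree := by rw [hl, Multiset.length_toList, hcard]
  set lam : ℕ → ℂ := fun t => l.getD t 0 with hlam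
  have hfac : q = Polynomial.C q.leadingCoeff
      * ∏ t ∈ Finset.range q.natDegree, (Polynomial.X - Polynomial.C (lam t)) := by
    have h := hsplit.eq_prod_roots
    have hco : q.roots = (↑l : Multiset ℂ) := (Multiset.coe_toList q.roots).symm
    rw [hco] at h
    have hprodeq : ((↑l : Multiset ℂ).map (fun a => Polynomial.X - Polynomial.C a)).prod
        = ∏ t ∈ Finset.range q.natDegree, (Polynomial.X - Polynomial.C (lam t)) := by
      rw [Multiset.map_coe, Multiset.prod_coe, list_map_prod_range, hlen]
    conv_lhs => rw [h, hprodeq]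
  have hroot : ∀ t, t < q.natDegree → q.IsRoot (lam t) := by
    intro t ht
    rw [← hlen] at ht
    have hmem : lam t ∈ l := by
      rw [hlam]
      simp only
      rw [l.getD_eq_getElem 0 ht]
      exact List.getElem_mem ht
    rw [hl, Multiset.mem_toList] at hmem
    exact (Polynomial.mem_roots hq).mp hmem
  have hbad1 : ∀ t, t < q.natDegree → 1 + ap * lam t ≠ 0 := by
    intro t ht
    apply one_add_ap_ne
    intro hc
    apply h1
    have := hroot t ht
    rwa [hc] at this
  have hbad2 : ∀ t, t < q.natDegree → 1 + am * lam t ≠ 0 := by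
    intro t ht
    apply one_add_am_ne
    intro hc
    apply h2
    have := hroot t ht
    rwa [hc] at this
  -- the chain of functions
  set w : ℕ → Lp → Matrix (Fin m) (Fin k) ℂ :=
    fun t => Polynomial.aeval (Dop (V := Matrix (Fin m) (Fin k) ℂ))
      (∏ s ∈ Finset.range t, (Polynomial.X - Polynomial.C (lam s))) f with hwdef
  have hw0 : w 0 = f := by
    rw [hwdef]
    simp
  have hwDA : ∀ t, DApV (w t) := fun t => DA_aeval hf _
  have hwstep : ∀ t, w (t + 1) = Dop (w t) - lam t • w t := by
    intro t
    rw [hwdef]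
    simp only
    rw [Finset.prod_range_succ, mul_comm, map_mul, Module.End.mul_apply, map_sub,
      Polynomial.aeval_X, Polynomial.aeval_C, Algebra.algebraMap_eq_smul_one,
      LinearMap.sub_apply, LinearMap.smul_apply, Module.End.one_apply]
  have hwd : w q.natDegree = 0 := by
    have hqf : Polynomial.aeval (Dop (V := Matrix (Fin m) (Fin k) ℂ)) q f
        = q.leadingCoeff • w q.natDegree := by
      conv_lhs => rw [hfac]
      rw [map_mul, Module.End.mul_apply, Polynomial.aeval_C, Algebra.algebraMap_eq_smul_one,
        LinearMap.smul_apply, Module.End.one_apply]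
    rw [hqv] at hqf
    have hlc : q.leadingCoeff ≠ 0 := Polynomial.leadingCoeff_ne_zero.mpr hq
    have := hqf.symm
    rw [smul_eq_zero] at this
    exact this.resolve_left hlc
  -- case on the degree
  rcases hd : q.natDegree with _ | dd
  · -- degree zero: f = 0
    have hqc : q = Polynomial.C (q.coeff 0) := Polynomial.eq_C_of_natDegree_eq_zero hd
    have hc0 : q.coeff 0 ≠ 0 := by
      intro hc
      apply hq
      rw [hqc, hc, map_zero]
    have hf0 : f = 0 := by
      have : Polynomial.aeval (Dop (V := Matrix (Fin m) (Fin k) ℂ)) q f = q.coeff 0 • f := by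
        conv_lhs => rw [hqc]
        rw [Polynomial.aeval_C, Algebra.algebraMap_eq_smul_one, LinearMap.smul_apply,
          Module.End.one_apply]
      rw [hqv] at this
      have h := this.symm
      rw [smul_eq_zero] at h
      exact h.resolve_left hc0
    refine ⟨0, 0, 0, 0, ?_, ?_, ?_⟩
    · rw [Matrix.det_fin_zero]; exact one_ne_zero
    · rw [Matrix.det_fin_zero]; exact one_ne_zero
    · intro z
      rw [mul_empty_zero]
      rw [dxV, hf0]
      simp
  · -- degree dd + 1
    set d : ℕ := dd + 1 with hdd
    rw [hd] at hwd hbad1 hbad2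
    set T : Matrix (Fin d) (Fin d) ℂ :=
      Matrix.of (fun t s => if s = t then lam (t : ℕ)
        else if (s : ℕ) = (t : ℕ) + 1 then 1 else 0) with hT
    set Am : Matrix (Fin d × Fin m) (Fin d × Fin m) ℂ :=
      Matrix.kroneckerMap (· * ·) T (1 : Matrix (Fin m) (Fin m) ℂ) with hAm
    set u : Lp → Matrix (Fin d × Fin m) (Fin k) ℂ :=
      fun z => Matrix.of (fun tr j => w (tr.1 : ℕ) z tr.2 j) with hu
    -- row computation
    have hrow : ∀ (z : Lp) (t : Fin d) (r : Fin m) (j : Fin k),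
        (Am * u z) (t, r) j = lam (t : ℕ) * w (t : ℕ) z r j + w ((t : ℕ) + 1) z r j := by
      intro z t r j
      rw [Matrix.mul_apply, Fintype.sum_prod_type]
      have hinner : ∀ s : Fin d,
          (∑ r' : Fin m, Am (t, r) (s, r') * u z (s, r') j)
            = T t s * w (s : ℕ) z r j := by
        intro s
        have hterm : ∀ r' : Fin m, Am (t, r) (s, r') * u z (s, r') j
            = (if r' = r then T t s * w (s : ℕ) z r' j else 0) := by
          intro r'
          show (T t s * (1 : Matrix (Fin m) (Fin m) ℂ) r r') * w (s : ℕ) z r' j = _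
          rcases eq_or_ne r' r with rfl | hne
          · rw [if_pos rfl, Matrix.one_apply_eq, mul_one]
          · rw [if_neg hne, Matrix.one_apply_ne (Ne.symm hne), mul_zero, zero_mul]
        rw [Finset.sum_congr rfl (fun r' _ => hterm r'), Finset.sum_ite_eq' Finset.univ r]
        simp
      rw [Finset.sum_congr rfl (fun s _ => hinner s)]
      have hTsplit : ∀ s : Fin d, T t s * w (s : ℕ) z r j
          = (if s = t then lam (t : ℕ) * w (t : ℕ) z r j else 0)
            + (if (s : ℕ) = (t : ℕ) + 1 then w (s : ℕ) z r j else 0) := by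
        intro s
        show (if s = t then lam (t : ℕ) else if (s : ℕ) = (t : ℕ) + 1 then 1 else 0)
            * w (s : ℕ) z r j = _
        rcases eq_or_ne s t with rfl | hst
        · rw [if_pos rfl, if_pos rfl, if_neg (by omega), add_zero]
        · rw [if_neg hst, if_neg hst, zero_add]
          by_cases hsn : (s : ℕ) = (t : ℕ) + 1
          · rw [if_pos hsn, if_pos hsn, one_mul, hsn]
          · rw [if_neg hsn, if_neg hsn, zero_mul]
      rw [Finset.sum_congr rfl (fun s _ => hTsplit s), Finset.sum_add_distrib]
      congr 1
      · rw [Finset.sum_ite_eq' Finset.univ t]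
        simp
      · by_cases hlt : (t : ℕ) + 1 < d
        · rw [Finset.sum_eq_single (⟨(t : ℕ) + 1, hlt⟩ : Fin d)]
          · simp
          · intro s _ hne
            exact if_neg (fun hc => hne (Fin.ext hc))
          · intro habs
            exact absurd (Finset.mem_univ _) habs
        · have ht1 : (t : ℕ) + 1 = d := by have := t.2; omega
          rw [Finset.sum_eq_zero, ht1]
          · rw [hwd]
            rfl
          · intro s _
            apply if_neg
            intro hc
            apply hlt
            rw [← hc]
            exact s.2
    -- x-shift relation
    have hux : ∀ z, u (shx z) = (1 + Am) * u z := by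
      intro z
      ext tr j
      obtain ⟨t, r⟩ := tr
      rw [Matrix.add_mul, Matrix.one_mul, Matrix.add_apply, hrow]
      show w (t : ℕ) (shx z) r j
        = u z (t, r) j + (lam (t : ℕ) * w (t : ℕ) z r j + w ((t : ℕ) + 1) z r j)
      have hfin : w (t : ℕ) (shx z)
          = w (t : ℕ) z + (w ((t : ℕ) + 1) z + lam (t : ℕ) • w (t : ℕ) z) := by
        have hs := congrFun (hwstep (t : ℕ)) z
        simp only [Pi.sub_apply, Pi.smul_apply] at hs
        rw [Dop_apply] at hs
        linear_combination (norm := module) -hs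
      have hent := congrFun (congrFun hfin r) j
      simp only [Matrix.add_apply, Matrix.smul_apply, smul_eq_mul] at hent
      rw [hent]
      show _ = w (t : ℕ) z r j + (lam (t : ℕ) * w (t : ℕ) z r j + w ((t : ℕ) + 1) z r j)
      ring
    -- discrete analyticity of u
    have huDA : DApV u := by
      intro z
      ext tr j
      obtain ⟨t, r⟩ := tr
      have h3 := congrFun (congrFun (hwDA (t : ℕ) z) r) j
      simp only [Matrix.smul_apply, Matrix.sub_apply, smul_eq_mul] at h3 ⊢
      exact h3
    have hMCR := matrix_CR huDA hux
    -- determinants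
    have hkron : ∀ c : ℂ, (1 : Matrix (Fin d × Fin m) (Fin d × Fin m) ℂ) + c • Am
        = Matrix.kroneckerMap (· * ·) (1 + c • T) (1 : Matrix (Fin m) (Fin m) ℂ) := by
      intro c
      rw [hAm, Matrix.add_kronecker, Matrix.one_kronecker_one, Matrix.smul_kronecker]
    have htri : ∀ c : ℂ, (1 + c • T).det = ∏ t : Fin d, (1 + c * lam (t : ℕ)) := by
      intro c
      have hbt : (1 + c • T).BlockTriangular id := by
        intro i j hij
        have hco : (j : ℕ) < (i : ℕ) := hij
        have hT0 : T i j = 0 := by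
          show (if j = i then lam (i : ℕ) else if (j : ℕ) = (i : ℕ) + 1 then 1 else 0) = 0
          rw [if_neg (show j ≠ i from ne_of_lt hij), if_neg (by omega)]
        rw [Matrix.add_apply, Matrix.smul_apply, hT0, smul_zero, add_zero,
          Matrix.one_apply_ne (show i ≠ j from ne_of_gt hij)]
      rw [Matrix.det_of_upperTriangular hbt]
      apply Finset.prod_congr rfl
      intro t _
      rw [Matrix.add_apply, Matrix.one_apply_eq, Matrix.smul_apply]
      show 1 + c • (if t = t then lam (t : ℕ) else if (t:ℕ) = (t:ℕ)+1 then 1 else 0) = _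
      rw [if_pos rfl, smul_eq_mul]
    have hdetp : IsUnit (1 + ap • Am).det := by
      rw [hkron, Matrix.det_kronecker, htri, Matrix.det_one, one_pow, mul_one]
      apply isUnit_iff_ne_zero.mpr
      apply pow_ne_zero
      rw [Finset.prod_ne_zero_iff]
      intro t _
      exact hbad1 (t : ℕ) t.2
    have hdetm : IsUnit (1 + am • Am).det := by
      rw [hkron, Matrix.det_kronecker, htri, Matrix.det_one, one_pow, mul_one]
      apply isUnit_iff_ne_zero.mpr
      apply pow_ne_zero
      rw [Finset.prod_ne_zero_iff]
      intro t _
      exact hbad2 (t : ℕ) t.2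
    have hsol := solve_system hdetp hdetm hux hMCR
    set z0 : Fin d := ⟨0, by omega⟩ with hz0
    set Crow : Matrix (Fin m) (Fin d × Fin m) ℂ :=
      Matrix.of (fun r tr => if tr = (z0, r) then 1 else 0) with hCrow
    have hCmul : ∀ (X : Matrix (Fin d × Fin m) (Fin k) ℂ) (r : Fin m) (j : Fin k),
        (Crow * X) r j = X (z0, r) j := by
      intro X r j
      rw [Matrix.mul_apply, Finset.sum_eq_single ((z0, r))]
      · show (if ((z0, r) : Fin d × Fin m) = (z0, r) then (1 : ℂ) else 0) * X (z0, r) j = _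
        rw [if_pos rfl, one_mul]
      · intro b _ hne
        show (if b = (z0, r) then (1 : ℂ) else 0) * X b j = 0
        rw [if_neg hne, zero_mul]
      · intro habs
        exact absurd (Finset.mem_univ _) habs
    have hureal : ∀ z, dxV f z = Crow * eMatI Am z * (Am * u pt0) := by
      intro z
      ext r j
      have hx3 := congrFun (congrFun (hux z) (z0, r)) j
      rw [Matrix.add_mul, Matrix.one_mul, Matrix.add_apply] at hx3
      have hu0 : ∀ (y : Lp), u y (z0, r) j = f y r j := by
        intro y
        show w 0 y r j = f y r j
        rw [hw0]
      calc dxV f z r j = (Am * u z) (z0, r) j := by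
            show f (shx z) r j - f z r j = _
            rw [← hu0 (shx z), ← hu0 z, hx3]
            ring
        _ = (Am * (eMatI Am z * u pt0)) (z0, r) j := by rw [← hsol z]
        _ = (eMatI Am z * (Am * u pt0)) (z0, r) j := by
            rw [← Matrix.mul_assoc, (commute_eMatI Am).eq, Matrix.mul_assoc]
        _ = (Crow * (eMatI Am z * (Am * u pt0))) r j := (hCmul _ r j).symm
        _ = (Crow * eMatI Am z * (Am * u pt0)) r j := by rw [Matrix.mul_assoc]
    -- transport to Fin (d * m)
    refine ⟨d * m, Am.submatrix ⇑(finProdFinEquiv (m := d) (n := m)).symm ⇑finProdFinEquiv.symm,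
      (Am * u pt0).submatrix ⇑finProdFinEquiv.symm id,
      Crow.submatrix id ⇑finProdFinEquiv.symm, ?_, ?_, ?_⟩
    · rw [submatrix_oneAdd, Matrix.det_submatrix_equiv_self]
      exact hdetp.ne_zero
    · rw [submatrix_oneAdd, Matrix.det_submatrix_equiv_self]
      exact hdetm.ne_zero
    · intro z
      rw [eMat_eq_eMatI, eMatI_submatrix, Matrix.submatrix_mul_equiv,
        Matrix.submatrix_mul_equiv, Matrix.submatrix_id_id]
      exact hureal z

end Realize
/-- a discrete analytic matrix-valued f on Λ₊ is rational iff some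
nontrivial linear combination Σ_j a_j Zʲ f (a_j ∈ ℂ, not all zero) is a discrete
analytic polynomial Σ_l p l (z)·B_l. -/
theorem stmt17 (m k : ℕ) (f : Lp → Matrix (Fin m) (Fin k) ℂ) (hf : DApV f)
    (p : ℕ → Lp → ℂ) (hp : IsStdBasisP p)
    (Z : (Lp → Matrix (Fin m) (Fin k) ℂ) → (Lp → Matrix (Fin m) (Fin k) ℂ))
    (hZ : ∀ g, DApV g → DApV (Z g) ∧ Z g pt0 = 0 ∧ dxV (Z g) = g) :
    IsRatDA f ↔
      ∃ (N : ℕ) (a : ℕ → ℂ), (∃ j ≤ N, a j ≠ 0) ∧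
        ∃ (M : ℕ) (B : ℕ → Matrix (Fin m) (Fin k) ℂ),
          ∀ z : Lp, ∑ j ∈ Finset.range (N + 1), a j • (Z^[j] f) z
            = ∑ l ∈ Finset.range (M + 1), p l z • B l := by
  constructor
  · rintro ⟨N, A, B, C, hdp, hdm, hreal⟩
    exact forwardDir A C B f hf p hp Z hZ hreal
  · rintro ⟨N, a, ⟨j0, hj0N, hj0⟩, M, B, hsum⟩
    set T : ℕ := N + M + 2 with hT
    set Q : Polynomial ℂ :=
      ∑ j ∈ Finset.range (N + 1), Polynomial.C (a j) * Polynomial.X ^ (T - j) with hQ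
    have hQcoeff : Q.coeff (T - j0) = a j0 := by
      rw [hQ, Polynomial.finset_sum_coeff]
      rw [Finset.sum_eq_single j0]
      · rw [Polynomial.coeff_C_mul, Polynomial.coeff_X_pow, if_pos rfl, mul_one]
      · intro b hb hne
        rw [Polynomial.coeff_C_mul, Polynomial.coeff_X_pow, if_neg, mul_zero]
        intro hc
        apply hne
        have hbN : b ≤ N := Nat.lt_succ_iff.mp (Finset.mem_range.mp hb)
        omega
      · intro h
        exact absurd (Finset.mem_range.mpr (by omega)) h
    have hQne : Q ≠ 0 := by
      intro hc
      apply hj0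
      rw [← hQcoeff, hc, Polynomial.coeff_zero]
    have hGfun : (∑ j ∈ Finset.range (N + 1), a j • Z^[j] f)
        = (fun z => ∑ l ∈ Finset.range (M + 1), p l z • B l) := by
      funext z
      simp only [Finset.sum_apply, Pi.smul_apply]
      exact hsum z
    have hQappl : Polynomial.aeval (Dop (V := Matrix (Fin m) (Fin k) ℂ)) Q f = 0 := by
      have h1 : Polynomial.aeval (Dop (V := Matrix (Fin m) (Fin k) ℂ)) Q f
          = ∑ j ∈ Finset.range (N + 1), a j • ((Dop ^ (T - j)) f) := by
        rw [hQ, map_sum, LinearMap.sum_apply]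
        apply Finset.sum_congr rfl
        intro j _
        rw [map_mul, Polynomial.aeval_C, Polynomial.aeval_X_pow,
          Algebra.algebraMap_eq_smul_one, Module.End.mul_apply, LinearMap.smul_apply,
          Module.End.one_apply]
      have h2 : ∀ j ∈ Finset.range (N + 1),
          a j • ((Dop ^ (T - j)) f) = a j • ((Dop ^ T) (Z^[j] f)) := by
        intro j hj
        have key : (Dop ^ ((T - j) + j)) (Z^[j] f) = (Dop ^ (T - j)) f := by
          rw [pow_add, Module.End.mul_apply, Z_iter_dx hf hZ j]
        have hjN : j ≤ N := Nat.lt_succ_iff.mp (Finset.mem_range.mp hj)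
        have hTj : (T - j) + j = T := by omega
        rw [hTj] at key
        rw [← key]
      have h3 : ∑ j ∈ Finset.range (N + 1), a j • ((Dop ^ T) (Z^[j] f))
          = (Dop ^ T) (∑ j ∈ Finset.range (N + 1), a j • Z^[j] f) := by
        rw [map_sum]
        apply Finset.sum_congr rfl
        intro j _
        rw [map_smul]
      rw [h1, Finset.sum_congr rfl h2, h3, hGfun]
      have hpoly : (fun z => ∑ l ∈ Finset.range (M + 1), p l z • B l)
          = ∑ l ∈ Finset.range (M + 1), (fun z => p l z • B l) := by
        funext z
        simp [Finset.sum_apply]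
      rw [hpoly, map_sum]
      apply Finset.sum_eq_zero
      intro l hl
      have hlM : l ≤ M := Nat.lt_succ_iff.mp (Finset.mem_range.mp hl)
      have key2 : (Dop ^ ((T - (l + 1)) + (l + 1))) (fun z => p l z • B l) = 0 := by
        rw [pow_add, Module.End.mul_apply, Dop_pow_p_smul hp, map_zero]
      have hTl : (T - (l + 1)) + (l + 1) = T := by omega
      rw [hTl] at key2
      exact key2
    obtain ⟨q', hq'ne, h1', h2', hq'v⟩ :=
      rootRemove hf Q.natDegree Q le_rfl hQne hQappl
    exact realize f hf q' hq'ne h1' h2' hq'v
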